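/- arXiv:2505.14957 — 2 statements merged into one kernel-verified Lean document; each statement's English description precedes it below -/
import Mathlib

section
/- For every k with d ≤ k ≤ n, the lower bound ν_k^C satisfies ν_k^C ≤ z_k ≤ ((n−d+1)/(k−d+1))·ν_k^C. -/
/-
For `|S| > d`, put `B = (∑_{i∈S} a_i a_iᵀ + λI)⁻¹`, `s_i = a_iᵀ B a_i` and `p_i = ‖B a_i‖²`.
Sherman–Morrison gives `f(S \ i) = f(S) + p_i / (1 - s_i)` with `s_i < 1`, while
`∑_S s_i = d - λ tr B ≤ d` and `∑_S p_i = tr B - λ tr B² ≤ f(S)`. Averaging therefore yields an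
`i ∈ S` with `(|S| - d) f(S \ i) ≤ (|S| - d + 1) f(S)`. Removing elements one at a time from the
full set telescopes to `(k - d + 1) f(S_k) ≤ (n - d + 1) f([n])` for some `|S_k| = k`.
Finally `f([n]) ≤ ν_k^C`, because the trace of the inverse decreases when positive semidefinite
rank-one terms `(1 - x_i) a_i a_iᵀ` are added, and `ν_k^C ≤ z_k`, because indicator vectors are
feasible for the relaxation.
-/

open Matrix Finset

noncomputable section


/-- The information matrix `∑_{i ∈ S} a_i a_iᵀ + λ I_d`. -/
def infoM (d n : ℕ) (a : Fin n → Fin d → ℝ) (lam : ℝ) (S : Finset (Fin n)) :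
    Matrix (Fin d) (Fin d) ℝ :=
  (∑ i ∈ S, Matrix.vecMulVec (a i) (a i)) + lam • (1 : Matrix (Fin d) (Fin d) ℝ)

/-- `f(S) = tr((∑_{i∈S} a_i a_iᵀ + λ I_d)⁻¹)`. -/
def fS (d n : ℕ) (a : Fin n → Fin d → ℝ) (lam : ℝ) (S : Finset (Fin n)) : ℝ :=
  Matrix.trace (infoM d n a lam S)⁻¹

/-- `z_k = min_{|S| = k} f(S)`. -/
def zk (d n : ℕ) (a : Fin n → Fin d → ℝ) (lam : ℝ) (k : ℕ) : ℝ :=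
  sInf {r : ℝ | ∃ S : Finset (Fin n), S.card = k ∧ fS d n a lam S = r}

/-- The matrix `∑_i x_i a_i a_iᵀ + λ I_d` for a fractional vector `x`. -/
def contM (d n : ℕ) (a : Fin n → Fin d → ℝ) (lam : ℝ) (x : Fin n → ℝ) :
    Matrix (Fin d) (Fin d) ℝ :=
  (∑ i : Fin n, x i • Matrix.vecMulVec (a i) (a i)) + lam • (1 : Matrix (Fin d) (Fin d) ℝ)

/-- The continuous relaxation value `ν_k^C`. -/
def nuC (d n : ℕ) (a : Fin n → Fin d → ℝ) (lam : ℝ) (k : ℕ) : ℝ :=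
  sInf {r : ℝ | ∃ x : Fin n → ℝ, (∀ i, 0 ≤ x i ∧ x i ≤ 1) ∧ (∑ i, x i) = (k : ℝ) ∧
    Matrix.trace (contM d n a lam x)⁻¹ = r}

end

namespace Matrix

variable {m : Type*} [Fintype m]

theorem IsSymm.vecMul_eq_mulVec {α : Type*} [CommSemiring α] {A : Matrix m m α} (hA : A.IsSymm)
    (v : m → α) : v ᵥ* A = A *ᵥ v := by
  rw [← vecMul_transpose, hA.eq]

theorem posSemidef_smul_vecMulVec_self {t : ℝ} (ht : 0 ≤ t) (u : m → ℝ) :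
    (t • vecMulVec u u).PosSemidef := by
  simpa using (posSemidef_vecMulVec_self_star u).smul ht

variable [DecidableEq m]

theorem inv_sub_vecMulVec {K : Type*} [Field K] {M : Matrix m m K} (hM : IsUnit M.det)
    (u w : m → K) (hs : w ⬝ᵥ M⁻¹ *ᵥ u ≠ 1) :
    (M - vecMulVec u w)⁻¹ =
      M⁻¹ + (1 - w ⬝ᵥ M⁻¹ *ᵥ u)⁻¹ • vecMulVec (M⁻¹ *ᵥ u) (w ᵥ* M⁻¹) := by
  apply inv_eq_right_inv
  have hMv : M *ᵥ (M⁻¹ *ᵥ u) = u := by rw [mulVec_mulVec, mul_nonsing_inv M hM, one_mulVec]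
  rw [sub_mul, mul_add, mul_add, mul_nonsing_inv M hM, mul_smul_comm, mul_smul_comm,
    mul_vecMulVec, hMv, vecMulVec_mul, vecMulVec_mul_vecMulVec, vecMulVec_smul]
  set s := w ⬝ᵥ M⁻¹ *ᵥ u
  rw [add_sub_add_comm, smul_smul, ← sub_smul, ← mul_one_sub,
    inv_mul_cancel₀ (sub_ne_zero.mpr hs.symm), one_smul, sub_add_cancel]

section Real

variable {M : Matrix m m ℝ}

theorem PosDef.isSymm_inv (hM : M.PosDef) : M⁻¹.IsSymm :=
  isHermitian_iff_isSymm.mp hM.inv.isHermitian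

theorem PosDef.trace_inv_sub_smul_vecMulVec (hM : M.PosDef) (c : ℝ) (u : m → ℝ)
    (h : c * (u ⬝ᵥ M⁻¹ *ᵥ u) ≠ 1) :
    trace (M - c • vecMulVec u u)⁻¹ =
      trace M⁻¹ + c / (1 - c * (u ⬝ᵥ M⁻¹ *ᵥ u)) * ((M⁻¹ *ᵥ u) ⬝ᵥ (M⁻¹ *ᵥ u)) := by
  have hs : u ⬝ᵥ M⁻¹ *ᵥ (c • u) = c * (u ⬝ᵥ M⁻¹ *ᵥ u) := by
    rw [mulVec_smul, dotProduct_smul, smul_eq_mul]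
  rw [← smul_vecMulVec, inv_sub_vecMulVec hM.det_pos.ne'.isUnit (c • u) u (by rwa [hs]), hs,
    trace_add, trace_smul, trace_vecMulVec, hM.isSymm_inv.vecMul_eq_mulVec, mulVec_smul,
    smul_dotProduct, smul_eq_mul, smul_eq_mul]
  ring

theorem PosDef.mul_dotProduct_inv_mulVec_lt_one (hM : M.PosDef) {c : ℝ} {u : m → ℝ}
    (hN : (M - c • vecMulVec u u).PosDef) : c * (u ⬝ᵥ M⁻¹ *ᵥ u) < 1 := by
  set v := M⁻¹ *ᵥ u
  have hMv : M *ᵥ v = u := by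
    rw [mulVec_mulVec, mul_nonsing_inv M hM.det_pos.ne'.isUnit, one_mulVec]
  by_cases hv : v = 0
  · simp [hv]
  -- `v ⬝ᵥ (M - c • u uᵀ) *ᵥ v = s * (1 - c * s)` with `s = u ⬝ᵥ v = v ⬝ᵥ M *ᵥ v > 0`
  have hs : 0 < u ⬝ᵥ v := by simpa [← hMv, dotProduct_comm] using hM.dotProduct_mulVec_pos hv
  have hq : 0 < (u ⬝ᵥ v) * (1 - c * (u ⬝ᵥ v)) := by
    have hpos := hN.dotProduct_mulVec_pos hv
    simp only [star_trivial, sub_mulVec, smul_mulVec, hMv, vecMulVec_mulVec, op_smul_eq_smul,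
      dotProduct_sub, dotProduct_smul, smul_eq_mul, dotProduct_comm v u] at hpos
    linarith
  nlinarith

theorem PosDef.trace_inv_add_smul_vecMulVec_le (hM : M.PosDef) {t : ℝ} (ht : 0 ≤ t)
    (u : m → ℝ) : trace (M + t • vecMulVec u u)⁻¹ ≤ trace M⁻¹ := by
  have hM' : (M + t • vecMulVec u u).PosDef :=
    hM.add_posSemidef (posSemidef_smul_vecMulVec_self ht u)
  have hsub : M + t • vecMulVec u u - t • vecMulVec u u = M := add_sub_cancel_right _ _
  have hlt := hM'.mul_dotProduct_inv_mulVec_lt_one (hsub ▸ hM)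
  have key := hM'.trace_inv_sub_smul_vecMulVec t u hlt.ne
  rw [hsub] at key
  rw [key, le_add_iff_nonneg_right]
  exact mul_nonneg (div_nonneg ht (sub_pos.mpr hlt).le) (dotProduct_self_star_nonneg _)

theorem PosDef.trace_inv_add_sum_le {ι : Type*} (hM : M.PosDef) (s : Finset ι) (t : ι → ℝ)
    (ht : ∀ i ∈ s, 0 ≤ t i) (a : ι → m → ℝ) :
    trace (M + ∑ i ∈ s, t i • vecMulVec (a i) (a i))⁻¹ ≤ trace M⁻¹ := by
  classical
  induction s using Finset.induction generalizing M with
  | empty => simp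
  | insert j s hj ih =>
    rw [sum_insert hj, ← add_assoc]
    have htj := ht j (mem_insert_self j s)
    exact (ih (hM.add_posSemidef (posSemidef_smul_vecMulVec_self htj (a j)))
      fun i hi => ht i (mem_insert_of_mem hi)).trans (hM.trace_inv_add_smul_vecMulVec_le htj _)

end Real

end Matrix

section

variable {d n : ℕ} {a : Fin n → Fin d → ℝ} {lam : ℝ}

theorem infoM_posDef (hlam : 0 < lam) (S : Finset (Fin n)) : (infoM d n a lam S).PosDef :=
  PosDef.posSemidef_add (posSemidef_sum S fun i _ => by
    simpa using posSemidef_vecMulVec_self_star (a i)) (PosDef.one.smul hlam)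

theorem contM_posDef (hlam : 0 < lam) {x : Fin n → ℝ} (hx : ∀ i, 0 ≤ x i) :
    (contM d n a lam x).PosDef :=
  PosDef.posSemidef_add
    (posSemidef_sum univ fun i _ => posSemidef_smul_vecMulVec_self (hx i) (a i))
    (PosDef.one.smul hlam)

theorem fS_nonneg (hlam : 0 < lam) (S : Finset (Fin n)) : 0 ≤ fS d n a lam S :=
  (infoM_posDef hlam S).inv.posSemidef.trace_nonneg

theorem infoM_erase {S : Finset (Fin n)} {i : Fin n} (hi : i ∈ S) :
    infoM d n a lam (S.erase i) = infoM d n a lam S - vecMulVec (a i) (a i) := by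
  rw [infoM, infoM, ← add_sum_erase S _ hi]
  abel

theorem sum_dotProduct_mulVec_eq_trace (X : Matrix (Fin d) (Fin d) ℝ) (S : Finset (Fin n)) :
    ∑ i ∈ S, a i ⬝ᵥ X *ᵥ a i = trace (X * (infoM d n a lam S - lam • 1)) := by
  rw [infoM, add_sub_cancel_right, mul_sum, trace_sum]
  refine sum_congr rfl fun i _ => ?_
  rw [mul_vecMulVec, trace_vecMulVec, dotProduct_comm]

theorem sum_dotProduct_inv_infoM_mulVec_le (hlam : 0 < lam) (S : Finset (Fin n)) :
    ∑ i ∈ S, a i ⬝ᵥ (infoM d n a lam S)⁻¹ *ᵥ a i ≤ d := by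
  have hM := infoM_posDef (a := a) hlam S
  rw [sum_dotProduct_mulVec_eq_trace, mul_sub, nonsing_inv_mul _ hM.det_pos.ne'.isUnit,
    Matrix.mul_smul, mul_one, trace_sub, trace_smul, trace_one, Fintype.card_fin, smul_eq_mul,
    sub_le_self_iff]
  exact mul_nonneg hlam.le hM.inv.posSemidef.trace_nonneg

theorem sum_inv_infoM_mulVec_dotProduct_self_le (hlam : 0 < lam) (S : Finset (Fin n)) :
    ∑ i ∈ S, ((infoM d n a lam S)⁻¹ *ᵥ a i) ⬝ᵥ ((infoM d n a lam S)⁻¹ *ᵥ a i) ≤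
      trace (infoM d n a lam S)⁻¹ := by
  have hM := infoM_posDef (a := a) hlam S
  set B := (infoM d n a lam S)⁻¹
  have hsq : ∀ v, (B *ᵥ v) ⬝ᵥ (B *ᵥ v) = v ⬝ᵥ (B * B) *ᵥ v := fun v => by
    rw [← mulVec_mulVec, dotProduct_mulVec, hM.isSymm_inv.vecMul_eq_mulVec, dotProduct_comm]
  simp_rw [hsq]
  rw [sum_dotProduct_mulVec_eq_trace, mul_sub, mul_assoc,
    nonsing_inv_mul _ hM.det_pos.ne'.isUnit, Matrix.mul_smul, mul_one, mul_one, trace_sub,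
    trace_smul, smul_eq_mul, sub_le_self_iff]
  have hBB : (Bᴴ * B).PosSemidef := posSemidef_conjTranspose_mul_self B
  rw [hM.inv.isHermitian.eq] at hBB
  exact mul_nonneg hlam.le hBB.trace_nonneg

theorem dotProduct_inv_infoM_mulVec_lt_one (hlam : 0 < lam) {S : Finset (Fin n)} {i : Fin n}
    (hi : i ∈ S) : a i ⬝ᵥ (infoM d n a lam S)⁻¹ *ᵥ a i < 1 := by
  have hN := infoM_posDef (a := a) hlam (S.erase i)
  rw [infoM_erase hi, ← one_smul ℝ (vecMulVec (a i) (a i))] at hN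
  simpa using (infoM_posDef hlam S).mul_dotProduct_inv_mulVec_lt_one hN

theorem fS_erase_eq (hlam : 0 < lam) {S : Finset (Fin n)} {i : Fin n} (hi : i ∈ S) :
    fS d n a lam (S.erase i) = fS d n a lam S +
      ((infoM d n a lam S)⁻¹ *ᵥ a i) ⬝ᵥ ((infoM d n a lam S)⁻¹ *ᵥ a i) /
        (1 - a i ⬝ᵥ (infoM d n a lam S)⁻¹ *ᵥ a i) := by
  have hlt := dotProduct_inv_infoM_mulVec_lt_one (a := a) hlam hi
  rw [fS, infoM_erase hi, ← one_smul ℝ (vecMulVec (a i) (a i)),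
    (infoM_posDef hlam S).trace_inv_sub_smul_vecMulVec 1 (a i) (by rw [one_mul]; exact hlt.ne),
    fS, one_mul]
  ring

theorem exists_mem_fS_erase_le (hlam : 0 < lam) {S : Finset (Fin n)} (hS : d < #S) :
    ∃ i ∈ S,
      ((#S : ℝ) - d) * fS d n a lam (S.erase i) ≤ ((#S : ℝ) - d + 1) * fS d n a lam S := by
  set B := (infoM d n a lam S)⁻¹
  set t := fS d n a lam S
  set s := fun i => a i ⬝ᵥ B *ᵥ a i
  set p := fun i => (B *ᵥ a i) ⬝ᵥ (B *ᵥ a i)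
  have hSd : (d : ℝ) < #S := by exact_mod_cast hS
  have ht : 0 ≤ t := fS_nonneg hlam S
  obtain ⟨i, hi, hle⟩ : ∃ i ∈ S, ((#S : ℝ) - d) * p i ≤ t * (1 - s i) := by
    -- averaging: `∑ (|S| - d) p_i ≤ (|S| - d) t ≤ t (|S| - ∑ s_i) = ∑ t (1 - s_i)`
    refine exists_le_of_sum_le (card_pos.mp (by omega)) ?_
    have hs : ∑ i ∈ S, s i ≤ d := sum_dotProduct_inv_infoM_mulVec_le hlam S
    have hp : ∑ i ∈ S, p i ≤ t := sum_inv_infoM_mulVec_dotProduct_self_le hlam S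
    rw [← mul_sum, ← mul_sum, sum_sub_distrib, sum_const, nsmul_one]
    nlinarith
  refine ⟨i, hi, ?_⟩
  rw [fS_erase_eq hlam hi]
  have hp : ((#S : ℝ) - d) * (p i / (1 - s i)) ≤ t := by
    rw [← mul_div_assoc, div_le_iff₀ (sub_pos.mpr (dotProduct_inv_infoM_mulVec_lt_one hlam hi))]
    exact hle
  show ((#S : ℝ) - d) * (t + p i / (1 - s i)) ≤ ((#S : ℝ) - d + 1) * t
  linarith

theorem exists_card_eq_fS_le (hlam : 0 < lam) {k : ℕ} (hdk : d ≤ k) (T : Finset (Fin n))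
    (hkT : k ≤ #T) :
    ∃ S : Finset (Fin n), #S = k ∧
      ((k : ℝ) - d + 1) * fS d n a lam S ≤ ((#T : ℝ) - d + 1) * fS d n a lam T := by
  induction T using Finset.strongInduction with
  | H T ih =>
    rcases hkT.eq_or_lt with hT | hT
    · exact ⟨T, hT.symm, by rw [hT]⟩
    obtain ⟨i, hi, hle⟩ := exists_mem_fS_erase_le (a := a) hlam (hdk.trans_lt hT)
    have hcard : #(T.erase i) + 1 = #T := card_erase_add_one hi
    obtain ⟨S, hS, hSle⟩ := ih (T.erase i) (erase_ssubset hi) (by omega)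
    refine ⟨S, hS, hSle.trans ?_⟩
    have hcard' : ((#(T.erase i) : ℕ) : ℝ) = #T - 1 := by
      rw [← hcard, Nat.cast_add_one, add_sub_cancel_right]
    rw [hcard']
    linarith

theorem contM_indicator (S : Finset (Fin n)) :
    contM d n a lam (fun i => if i ∈ S then 1 else 0) = infoM d n a lam S := by
  simp only [contM, infoM, ite_smul, one_smul, zero_smul, sum_ite_mem, univ_inter]

theorem exists_relaxation_eq_fS (S : Finset (Fin n)) :
    ∃ x : Fin n → ℝ, (∀ i, 0 ≤ x i ∧ x i ≤ 1) ∧ ∑ i, x i = #S ∧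
      trace (contM d n a lam x)⁻¹ = fS d n a lam S :=
  ⟨fun i => if i ∈ S then 1 else 0, fun i => by dsimp only; split_ifs <;> norm_num, by simp,
    by rw [contM_indicator, fS]⟩

theorem fS_univ_le_trace_inv_contM (hlam : 0 < lam) {x : Fin n → ℝ}
    (hx : ∀ i, 0 ≤ x i ∧ x i ≤ 1) : fS d n a lam univ ≤ trace (contM d n a lam x)⁻¹ := by
  have h : infoM d n a lam univ =
      contM d n a lam x + ∑ i, (1 - x i) • vecMulVec (a i) (a i) := by
    rw [infoM, contM, add_right_comm, ← sum_add_distrib]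
    simp_rw [← add_smul, add_sub_cancel, one_smul]
  rw [fS, h]
  exact (contM_posDef hlam fun i => (hx i).1).trace_inv_add_sum_le _ _
    (fun i _ => sub_nonneg.mpr (hx i).2) a

theorem nuC_le_fS (hlam : 0 < lam) {k : ℕ} {S : Finset (Fin n)} (hS : #S = k) :
    nuC d n a lam k ≤ fS d n a lam S :=
  csInf_le ⟨fS d n a lam univ, by
      rintro _ ⟨x, hx, -, rfl⟩
      exact fS_univ_le_trace_inv_contM hlam hx⟩
    (hS ▸ exists_relaxation_eq_fS S)

theorem fS_univ_le_nuC (hlam : 0 < lam) (S : Finset (Fin n)) :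
    fS d n a lam univ ≤ nuC d n a lam #S :=
  le_csInf ⟨_, exists_relaxation_eq_fS S⟩ fun _ ⟨_, hx, _, hr⟩ =>
    hr ▸ fS_univ_le_trace_inv_contM hlam hx

theorem zk_le_fS (hlam : 0 < lam) {k : ℕ} {S : Finset (Fin n)} (hS : #S = k) :
    zk d n a lam k ≤ fS d n a lam S :=
  csInf_le ⟨0, by rintro _ ⟨S, -, rfl⟩; exact fS_nonneg hlam S⟩ ⟨S, hS, rfl⟩

theorem nuC_le_zk (hlam : 0 < lam) {k : ℕ} (hkn : k ≤ n) :
    nuC d n a lam k ≤ zk d n a lam k := by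
  obtain ⟨S, -, hS⟩ := exists_subset_card_eq (s := (univ : Finset (Fin n))) (by simpa using hkn)
  exact le_csInf ⟨_, S, hS, rfl⟩ fun _ ⟨S, hS, hr⟩ => hr ▸ nuC_le_fS hlam hS

end

theorem stmt4_general (d n : ℕ)
    (a : Fin n → Fin d → ℝ) (lam : ℝ) (hlam : 0 < lam)
    (k : ℕ) (hdk : d ≤ k) (hkn : k ≤ n) :
    nuC d n a lam k ≤ zk d n a lam k ∧
    zk d n a lam k ≤ (((n : ℝ) - d + 1) / ((k : ℝ) - d + 1)) * nuC d n a lam k := by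
  refine ⟨nuC_le_zk hlam hkn, ?_⟩
  obtain ⟨S, hS, hle⟩ := exists_card_eq_fS_le (a := a) hlam hdk univ (by simpa using hkn)
  rw [card_univ, Fintype.card_fin] at hle
  have hdk' : (d : ℝ) ≤ k := by exact_mod_cast hdk
  have hkn' : (k : ℝ) ≤ n := by exact_mod_cast hkn
  calc zk d n a lam k ≤ fS d n a lam S := zk_le_fS hlam hS
    _ ≤ ((n : ℝ) - d + 1) / ((k : ℝ) - d + 1) * fS d n a lam univ := by
      rwa [div_mul_eq_mul_div, le_div_iff₀' (by linarith)]
    _ ≤ ((n : ℝ) - d + 1) / ((k : ℝ) - d + 1) * nuC d n a lam k := by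
      refine mul_le_mul_of_nonneg_left ?_ (div_nonneg (by linarith) (by linarith))
      simpa [hS] using fS_univ_le_nuC (a := a) hlam S

theorem stmt4 (d n : ℕ) (hd : 1 ≤ d) (hdn : d ≤ n)
    (a : Fin n → Fin d → ℝ) (lam : ℝ) (hlam : 0 < lam)
    (k : ℕ) (hdk : d ≤ k) (hkn : k ≤ n) :
    nuC d n a lam k ≤ zk d n a lam k ∧
    zk d n a lam k ≤ (((n : ℝ) - d + 1) / ((k : ℝ) - d + 1)) * nuC d n a lam k :=
  stmt4_general d n a lam hlam k hdk hkn
end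

section
/- z_k equals the minimum, over binary vectors x ∈ {0,1}^n with Σ_{i=1}^n x_i = k, of G(Σ_{i=1}^n x_i a_i a_iᵀ; λ) + (d − k̃)/λ. -/
open Matrix Finset

noncomputable section


open Classical in
/-- The eigenvalues of a symmetric matrix, listed in decreasing order with multiplicity
(and junk value `0` if the matrix is not symmetric). -/
def eigsDesc {d : ℕ} (X : Matrix (Fin d) (Fin d) ℝ) : Fin d → ℝ :=
  if h : X.IsHermitian then (fun i => (h.eigenvalues ∘ Tuple.sort h.eigenvalues) i.rev)
  else fun _ => 0

/-- `idxVal σ j` is `σ_{j+1}` in one-based indexing (junk value `0` out of range). -/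
def idxVal {m : ℕ} (σ : Fin m → ℝ) (j : ℕ) : ℝ := if h : j < m then σ ⟨j, h⟩ else 0

/-- `Σ_{i = η+1}^{m} σ_i` in one-based indexing. -/
def tailSum (m : ℕ) (σ : Fin m → ℝ) (η : ℕ) : ℝ :=
  ∑ i ∈ Finset.univ.filter (fun i : Fin m => η ≤ (i : ℕ)), σ i

/-- `η` is an integer with `0 ≤ η ≤ k-1` such that
`σ_η > (1/(k-η)) Σ_{i=η+1}^{m} σ_i ≥ σ_{η+1}` (one-based indexing, convention `σ_0 = ∞`). -/
def isEnvIdx (m k : ℕ) (σ : Fin m → ℝ) (η : ℕ) : Prop :=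
  η < k ∧ η < m ∧
  (η = 0 ∨ tailSum m σ η / ((k : ℝ) - η) < idxVal σ (η - 1)) ∧
  idxVal σ η ≤ tailSum m σ η / ((k : ℝ) - η)

/-- `Σ_{i=1}^{η} 1/(σ_i + λ) + (k-η)² / (Σ_{i=η+1}^{m} σ_i + (k-η)λ)`. -/
def envVal (m k : ℕ) (lam : ℝ) (σ : Fin m → ℝ) (η : ℕ) : ℝ :=
  (∑ i ∈ Finset.univ.filter (fun i : Fin m => (i : ℕ) < η), 1 / (σ i + lam)) +
    ((k : ℝ) - η) ^ 2 / (tailSum m σ η + ((k : ℝ) - η) * lam)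

open Classical in
/-- The function `G(X; λ)` (the convex envelope of `Γ(·;λ)`), defined via the unique index `η`;
with `lam = 0`, `d = n` and `kt = k`, this is the function `Φ`. -/
def Gfun (d kt : ℕ) (lam : ℝ) (X : Matrix (Fin d) (Fin d) ℝ) : ℝ :=
  if h : ∃ η, isEnvIdx d kt (eigsDesc X) η then envVal d kt lam (eigsDesc X) h.choose
  else 0

end



/-!
For `S` with `|S| = k`, the matrix `X = ∑_{i ∈ S} a_i a_iᵀ` is positive semidefinite of rank at
most `k̃`, so its decreasing eigenvalues `σ_i` vanish for `i > k̃`. The defining inequality of `η`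
says that `σ_{η+1}` is at most the average of `σ_{η+1}, …, σ_{k̃}`, which are all `≤ σ_{η+1}`;
hence they are all equal, and `G(X; λ)` collapses to `∑_{i ≤ k̃} 1/(σ_i + λ)`. Adding `(d - k̃)/λ`
for the zero eigenvalues gives `tr((X + λI)⁻¹) = f(S)`. Finally, binary vectors with sum `k` are
exactly the indicators of the `k`-subsets.
-/

namespace Matrix

variable {ι m n K : Type*} [Fintype n] [Field K]

theorem rank_add_le (A B : Matrix m n K) : (A + B).rank ≤ A.rank + B.rank := by
  unfold rank
  rw [mulVecLin_add]
  exact (Submodule.finrank_mono (LinearMap.range_add_le _ _)).trans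
    (Submodule.finrank_add_le_finrank_add_finrank _ _)

theorem rank_sum_le (s : Finset ι) (A : ι → Matrix m n K) :
    (∑ i ∈ s, A i).rank ≤ ∑ i ∈ s, (A i).rank :=
  Finset.sum_hom_rel (r := fun B k => rank B ≤ k) (by simp only [rank_zero, le_refl])
    fun _ _ _ h => (rank_add_le _ _).trans (by gcongr)

theorem rank_sum_vecMulVec_le_card (s : Finset ι) (u : ι → m → K) (v : ι → n → K) :
    (∑ i ∈ s, vecMulVec (u i) (v i)).rank ≤ s.card :=
  (rank_sum_le s _).trans <| by
    simpa using Finset.sum_le_sum fun i _ => rank_vecMulVec_le (u i) (v i)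

theorem posSemidef_sum_vecMulVec_self (s : Finset ι) (u : ι → n → ℝ) :
    (∑ i ∈ s, vecMulVec (u i) (u i)).PosSemidef :=
  posSemidef_sum s fun i _ => by simpa using posSemidef_vecMulVec_self_star (u i)

theorem IsHermitian.trace_inv_add_smul_one [DecidableEq n] {X : Matrix n n ℝ} (hX : X.IsHermitian)
    {lam : ℝ} (h : ∀ i, hX.eigenvalues i + lam ≠ 0) :
    trace (X + lam • 1)⁻¹ = ∑ i, (hX.eigenvalues i + lam)⁻¹ := by
  set U : Matrix n n ℝ := (hX.eigenvectorUnitary : Matrix n n ℝ)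
  have hUU : star U * U = 1 := Unitary.coe_star_mul_self _
  have hUUstar : U * star U = 1 := Unitary.coe_mul_star_self _
  have hshift : X + lam • 1 = U * diagonal (fun i => hX.eigenvalues i + lam) * star U := by
    rw [← diagonal_add, ← smul_one_eq_diagonal, mul_add, add_mul, Matrix.mul_smul, mul_one,
      Matrix.smul_mul, hUUstar]
    conv_lhs => rw [hX.spectral_theorem, Unitary.conjStarAlgAut_apply]
    rfl
  have hdiag_inv : (diagonal fun i => hX.eigenvalues i + lam)⁻¹ =
      diagonal fun i => (hX.eigenvalues i + lam)⁻¹ := by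
    refine inv_eq_left_inv ?_
    rw [diagonal_mul_diagonal, ← diagonal_one]
    exact congrArg diagonal (funext fun i => inv_mul_cancel₀ (h i))
  rw [hshift, mul_inv_rev, mul_inv_rev, inv_eq_left_inv hUUstar, inv_eq_left_inv hUU, hdiag_inv,
    trace_mul_comm, mul_assoc, hUU, mul_one, trace_diagonal]

theorem IsHermitian.exists_perm_eigsDesc_eq {d : ℕ} {X : Matrix (Fin d) (Fin d) ℝ}
    (hX : X.IsHermitian) : ∃ e : Equiv.Perm (Fin d), eigsDesc X = hX.eigenvalues ∘ e :=
  ⟨Fin.revPerm.trans (Tuple.sort hX.eigenvalues), by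
    unfold eigsDesc; rw [dif_pos hX]; rfl⟩

theorem IsHermitian.antitone_eigsDesc {d : ℕ} {X : Matrix (Fin d) (Fin d) ℝ}
    (hX : X.IsHermitian) : Antitone (eigsDesc X) := by
  intro i j hij
  unfold eigsDesc; rw [dif_pos hX]
  exact Tuple.monotone_sort _ (Fin.rev_le_rev.mpr hij)

theorem IsHermitian.card_eigsDesc_ne_zero {d : ℕ} {X : Matrix (Fin d) (Fin d) ℝ}
    (hX : X.IsHermitian) : #{i | eigsDesc X i ≠ 0} = X.rank := by
  obtain ⟨e, he⟩ := hX.exists_perm_eigsDesc_eq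
  rw [hX.rank_eq_card_non_zero_eigs, ← Fintype.card_subtype, he]
  exact Fintype.card_congr (e.subtypeEquiv fun _ => Iff.rfl)

theorem PosSemidef.eigsDesc_nonneg {d : ℕ} {X : Matrix (Fin d) (Fin d) ℝ}
    (hX : X.PosSemidef) (i : Fin d) : 0 ≤ eigsDesc X i := by
  obtain ⟨e, he⟩ := hX.isHermitian.exists_perm_eigsDesc_eq
  rw [he]
  exact hX.eigenvalues_nonneg _

end Matrix

theorem idxVal_coe {m : ℕ} (σ : Fin m → ℝ) (i : Fin m) : idxVal σ i = σ i := dif_pos i.2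

theorem idxVal_eq_zero_of_card_le {m kt : ℕ} {σ : Fin m → ℝ} (hanti : Antitone σ)
    (hnn : ∀ i, 0 ≤ σ i) (hcard : #{i | σ i ≠ 0} ≤ kt) {j : ℕ} (hj : kt ≤ j) :
    idxVal σ j = 0 := by
  refine dite_eq_right_iff.mpr fun hjm => ?_
  by_contra hne
  have hsub : Iic ⟨j, hjm⟩ ⊆ ({i | σ i ≠ 0} : Finset (Fin m)) := fun i hi => by
    have := hanti (mem_Iic.mp hi)
    simp only [mem_filter, mem_univ, true_and]
    exact (lt_of_lt_of_le (lt_of_le_of_ne (hnn _) (Ne.symm hne)) this).ne'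
  have := (card_le_card hsub).trans hcard
  simp only [Fin.card_Iic] at this
  omega

theorem sum_comp_eq_sum_range_idxVal {M : Type*} [AddCommMonoid M] {m : ℕ}
    (σ : Fin m → ℝ) (g : ℝ → M) : ∑ i, g (σ i) = ∑ j ∈ range m, g (idxVal σ j) := by
  simp only [← idxVal_coe σ]
  exact Fin.sum_univ_eq_sum_range (fun j => g (idxVal σ j)) m

theorem sum_filter_comp_eq_sum_filter_range {M : Type*} [AddCommMonoid M] {m : ℕ}
    (σ : Fin m → ℝ) (p : ℕ → Prop) [DecidablePred p] (g : ℝ → M) :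
    ∑ i ∈ univ.filter (fun i : Fin m => p i), g (σ i) =
      ∑ j ∈ (range m).filter p, g (idxVal σ j) := by
  simp only [sum_filter, ← idxVal_coe σ]
  exact Fin.sum_univ_eq_sum_range (fun j => if p j then g (idxVal σ j) else 0) m

theorem tailSum_eq_sum_Ico {m kt : ℕ} {σ : Fin m → ℝ} (hkm : kt ≤ m)
    (hz : ∀ j, kt ≤ j → idxVal σ j = 0) (η : ℕ) :
    tailSum m σ η = ∑ j ∈ Ico η kt, idxVal σ j := by
  have hIco : {j ∈ range m | η ≤ j} = Ico η m := by ext; simp [and_comm]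
  calc tailSum m σ η = ∑ j ∈ Ico η m, idxVal σ j := by
        rw [tailSum]
        simpa only [id, hIco] using sum_filter_comp_eq_sum_filter_range σ (η ≤ ·) id
    _ = ∑ j ∈ Ico η kt, idxVal σ j := by
        refine (sum_subset (Ico_subset_Ico_right hkm) fun j hj hjkt => hz j ?_).symm
        simp only [mem_Ico] at hj hjkt
        omega

theorem exists_isEnvIdx {m kt : ℕ} {σ : Fin m → ℝ} (hkm : kt ≤ m) (hk : 0 < kt)
    (hz : ∀ j, kt ≤ j → idxVal σ j = 0) : ∃ η, isEnvIdx m kt σ η := by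
  -- `η` is the least such `j`; `j = kt - 1` qualifies since its tail is `σ_{kt-1}` alone
  have hP : ∃ j, j < kt ∧ idxVal σ j ≤ tailSum m σ j / ((kt : ℝ) - j) := by
    refine ⟨kt - 1, by omega, ?_⟩
    rw [tailSum_eq_sum_Ico hkm hz, Nat.Ico_pred_singleton hk, sum_singleton,
      Nat.cast_pred hk, sub_sub_cancel, div_one]
  obtain ⟨hηk, hle⟩ := Nat.find_spec hP
  refine ⟨Nat.find hP, hηk, by omega, ?_, hle⟩
  obtain hη | hη := Nat.eq_zero_or_pos (Nat.find hP)
  · exact Or.inl hη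
  obtain ⟨i, hi⟩ : ∃ i, Nat.find hP = i + 1 := ⟨Nat.find hP - 1, by omega⟩
  have hlt : tailSum m σ i / ((kt : ℝ) - i) < idxVal σ i :=
    not_le.mp fun h => Nat.find_min hP (show i < Nat.find hP by omega) ⟨by omega, h⟩
  have hrec : tailSum m σ i = idxVal σ i + tailSum m σ (i + 1) := by
    simp only [tailSum_eq_sum_Ico hkm hz]
    exact sum_eq_sum_Ico_succ_bot (by omega) _
  have hik : (i : ℝ) + 1 < kt := by exact_mod_cast hi ▸ hηk
  rw [hi, Nat.add_sub_cancel, Nat.cast_succ]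
  rw [hrec, div_lt_iff₀ (by linarith)] at hlt
  right
  rw [div_lt_iff₀ (by linarith)]
  linarith

theorem envVal_eq_sum_range {m kt η : ℕ} {σ : Fin m → ℝ} (lam : ℝ) (hanti : Antitone σ)
    (hkm : kt ≤ m) (hz : ∀ j, kt ≤ j → idxVal σ j = 0) (hη : isEnvIdx m kt σ η) :
    envVal m kt lam σ η = ∑ j ∈ range kt, 1 / (idxVal σ j + lam) := by
  obtain ⟨hηk, hηm, -, hle⟩ := hη
  set c := idxVal σ η
  have hlen : ((#(Ico η kt) : ℕ) : ℝ) = kt - η := by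
    rw [Nat.card_Ico, Nat.cast_sub hηk.le]
  have hpos : (0 : ℝ) < kt - η := sub_pos.mpr (by exact_mod_cast hηk)
  have hle_c : ∀ j ∈ Ico η kt, idxVal σ j ≤ c := fun j hj => by
    obtain ⟨hηj, hjk⟩ := mem_Ico.mp hj
    simpa only [c, idxVal, dif_pos (hjk.trans_le hkm), dif_pos hηm] using
      hanti (Fin.mk_le_mk.mpr hηj)
  -- the tail average is at least its largest term `c`, so the tail is constant
  have hflat : ∀ j ∈ Ico η kt, idxVal σ j = c := by
    refine (sum_eq_sum_iff_of_le hle_c).mp (le_antisymm (sum_le_sum hle_c) ?_)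
    rw [sum_const, nsmul_eq_mul, hlen, ← tailSum_eq_sum_Ico hkm hz, mul_comm]
    exact (le_div_iff₀ hpos).mp hle
  have htail : tailSum m σ η = (kt - η) * c := by
    rw [tailSum_eq_sum_Ico hkm hz, sum_congr rfl hflat, sum_const, nsmul_eq_mul, hlen]
  have htail_inv : ∑ j ∈ Ico η kt, 1 / (idxVal σ j + lam)
      = ((kt : ℝ) - η) ^ 2 / ((kt - η) * c + (kt - η) * lam) := by
    rw [sum_congr rfl fun j hj => by rw [hflat j hj], sum_const, nsmul_eq_mul, hlen]
    field_simp
  have hhead : ∑ i ∈ univ.filter (fun i : Fin m => (i : ℕ) < η), 1 / (σ i + lam)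
      = ∑ j ∈ range η, 1 / (idxVal σ j + lam) := by
    have hrange : (range m).filter (· < η) = range η := by ext; simp; omega
    simpa only [hrange] using sum_filter_comp_eq_sum_filter_range σ (· < η) (fun x => 1 / (x + lam))
  rw [envVal, hhead, htail, ← htail_inv, sum_range_add_sum_Ico _ hηk.le]

theorem Matrix.PosSemidef.idxVal_eigsDesc_eq_zero {d kt : ℕ} {X : Matrix (Fin d) (Fin d) ℝ}
    (hX : X.PosSemidef) (hrank : X.rank ≤ kt) {j : ℕ} (hj : kt ≤ j) :
    idxVal (eigsDesc X) j = 0 :=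
  idxVal_eq_zero_of_card_le hX.isHermitian.antitone_eigsDesc hX.eigsDesc_nonneg
    (hX.isHermitian.card_eigsDesc_ne_zero.trans_le hrank) hj

theorem Matrix.PosSemidef.Gfun_eq_sum_range {d kt : ℕ} (lam : ℝ) {X : Matrix (Fin d) (Fin d) ℝ}
    (hX : X.PosSemidef) (hrank : X.rank ≤ kt) (hkt : kt ≤ d) :
    Gfun d kt lam X = ∑ j ∈ range kt, 1 / (idxVal (eigsDesc X) j + lam) := by
  have hz : ∀ j, kt ≤ j → idxVal (eigsDesc X) j = 0 := fun _ => hX.idxVal_eigsDesc_eq_zero hrank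
  unfold Gfun
  split_ifs with h
  · exact envVal_eq_sum_range lam hX.isHermitian.antitone_eigsDesc hkt hz h.choose_spec
  -- for `kt = 0` no index exists and `Gfun` falls back to `0`, which is the empty sum
  · obtain rfl : kt = 0 := by
      by_contra hk
      exact h (exists_isEnvIdx hkt (Nat.pos_of_ne_zero hk) hz)
    rfl

theorem Matrix.PosSemidef.Gfun_add_eq_trace_inv {d kt : ℕ} {lam : ℝ}
    {X : Matrix (Fin d) (Fin d) ℝ} (hX : X.PosSemidef) (hlam : 0 < lam) (hrank : X.rank ≤ kt)
    (hkt : kt ≤ d) :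
    Gfun d kt lam X + ((d : ℝ) - kt) / lam = trace (X + lam • 1)⁻¹ := by
  obtain ⟨e, he⟩ := hX.isHermitian.exists_perm_eigsDesc_eq
  have hzero_tail : ∑ j ∈ Ico kt d, 1 / (idxVal (eigsDesc X) j + lam) = ((d : ℝ) - kt) / lam := by
    rw [sum_congr rfl fun j hj => by
        rw [hX.idxVal_eigsDesc_eq_zero hrank (mem_Ico.mp hj).1, zero_add], sum_const,
      Nat.card_Ico, nsmul_eq_mul, Nat.cast_sub hkt, mul_one_div]
  rw [hX.isHermitian.trace_inv_add_smul_one fun i => (add_pos_of_nonneg_of_pos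
      (hX.eigenvalues_nonneg i) hlam).ne', ← Equiv.sum_comp e, hX.Gfun_eq_sum_range lam hrank hkt,
    ← hzero_tail, sum_range_add_sum_Ico _ hkt]
  simpa only [he, one_div, Function.comp_apply] using
    (sum_comp_eq_sum_range_idxVal (eigsDesc X) fun x => 1 / (x + lam)).symm

theorem exists_finset_eq_indicator {ι : Type*} [Fintype ι] [DecidableEq ι] {x : ι → ℝ}
    (hx : ∀ i, x i = 0 ∨ x i = 1) : ∃ S : Finset ι, x = fun i => if i ∈ S then 1 else 0 := by
  refine ⟨univ.filter (x · = 1), funext fun i => ?_⟩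
  rcases hx i with h | h <;> simp [h]

theorem Gfun_add_eq_fS {d n k : ℕ} (a : Fin n → Fin d → ℝ) {lam : ℝ} (hlam : 0 < lam)
    {S : Finset (Fin n)} (hS : #S = k) :
    Gfun d (min k d) lam (∑ i ∈ S, vecMulVec (a i) (a i)) + ((d : ℝ) - (min k d : ℕ)) / lam
      = fS d n a lam S :=
  (posSemidef_sum_vecMulVec_self S a).Gfun_add_eq_trace_inv hlam
    (le_min ((rank_sum_vecMulVec_le_card S a a).trans hS.le) (rank_le_width _)) (min_le_right k d)

theorem stmt14_general (d n : ℕ)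
    (a : Fin n → Fin d → ℝ) (lam : ℝ) (hlam : 0 < lam)
    (k : ℕ) :
    zk d n a lam k =
      sInf {r : ℝ | ∃ x : Fin n → ℝ, (∀ i, x i = 0 ∨ x i = 1) ∧ (∑ i, x i) = (k : ℝ) ∧
        Gfun d (min k d) lam (∑ i : Fin n, x i • Matrix.vecMulVec (a i) (a i)) +
          ((d : ℝ) - (min k d : ℕ)) / lam = r} := by
  unfold zk
  congr 1
  ext r
  constructor
  · rintro ⟨S, hS, rfl⟩
    exact ⟨fun i => if i ∈ S then 1 else 0, fun i => by by_cases h : i ∈ S <;> simp [h],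
      by simp [hS], by simpa using Gfun_add_eq_fS a hlam hS⟩
  · rintro ⟨x, hx, hsum, rfl⟩
    obtain ⟨S, rfl⟩ := exists_finset_eq_indicator hx
    have hS : #S = k := by simpa using hsum
    exact ⟨S, hS, by simpa using (Gfun_add_eq_fS a hlam hS).symm⟩

theorem stmt14 (d n : ℕ) (hd : 1 ≤ d) (hdn : d ≤ n)
    (a : Fin n → Fin d → ℝ) (lam : ℝ) (hlam : 0 < lam)
    (k : ℕ) (hk1 : 1 ≤ k) (hkn : k ≤ n) :
    zk d n a lam k =
      sInf {r : ℝ | ∃ x : Fin n → ℝ, (∀ i, x i = 0 ∨ x i = 1) ∧ (∑ i, x i) = (k : ℝ) ∧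
        Gfun d (min k d) lam (∑ i : Fin n, x i • Matrix.vecMulVec (a i) (a i)) +
          ((d : ℝ) - (min k d : ℕ)) / lam = r} :=
  stmt14_general d n a lam hlam k
end
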